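/- Exact calibration case: under the assumptions of the asymptotic mean calibration theorem, if additionally ψ' is constant on (0,1) (exactly mean-calibrated), then the sharper bound |σ²[𝒢_σ(f*) - 𝒢_σ(f)] - c₀‖f - f*‖²_{2,ρ}| ≤ c'_ε·σ^{-ε} holds with exponent ε (rather than min(ε,2)), where c'_ε = 6M(L₃+c₀)E|2Y|^{1+ε}. -/

import Mathlib

/-!
Exact calibration makes `ψ` affine on `[0, 1)`, so the remainder
`F_σ(t) = -σ² ψ(t²/σ²) - c₀ t²` is constant for `|t| < σ`. Since `f* (X) = E[Y | X]`,
the cross term in `(Y - f)² - (Y - f*)²` integrates to zero, which turns the quantity to be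
bounded into `E[F_σ(Y - f) - F_σ(Y - f*)]`. The integrand vanishes where `|2Y| < σ`, and where
`|2Y| ≥ σ` the Lipschitz bound on `s ↦ ψ(s²)` makes it at most
`2M (L₁ + 2c₀) |2Y| ≤ 2M (L₁ + 2c₀) |2Y|^{1+ε} σ^{-ε}`.
-/

open MeasureTheory Set

theorem eq_add_mul_sub_of_hasDerivWithinAt_Ico {f f' : ℝ → ℝ} {a b : ℝ}
    (hf : ∀ x ∈ Ico a b, HasDerivWithinAt f (f' x) (Ico a b) x)
    (hf' : ∀ s ∈ Ioo a b, ∀ t ∈ Ioo a b, f' s = f' t) :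
    ∀ x ∈ Ico a b, f x = f a + f' a * (x - a) := by
  intro x hx
  have hab : a < b := hx.1.trans_lt hx.2
  have ha : a ∈ Ico a b := ⟨le_rfl, hab⟩
  set d := f' ((a + b) / 2)
  have hline : ∀ x ∈ Ico a b, f x = f a + d * (x - a) := by
    intro x hx
    rcases hx.1.eq_or_lt with rfl | hax
    · ring
    obtain ⟨ξ, hξ, hslope⟩ := exists_hasDerivAt_eq_slope f f' hax
      (fun y hy => (hf y ⟨hy.1, hy.2.trans_lt hx.2⟩).continuousWithinAt.mono
        (Icc_subset_Ico_right hx.2))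
      (fun y hy => (hf y ⟨hy.1.le, hy.2.trans hx.2⟩).hasDerivAt
        (Ico_mem_nhds hy.1 (hy.2.trans hx.2)))
    rw [hf' ξ ⟨hξ.1, hξ.2.trans hx.2⟩ ((a + b) / 2) ⟨by linarith, by linarith⟩,
      eq_div_iff (sub_ne_zero.2 hax.ne')] at hslope
    linarith
  have hd : HasDerivWithinAt f d (Ico a b) a := by
    have := ((hasDerivAt_id a).sub_const a).const_mul d |>.const_add (f a)
    simpa using this.hasDerivWithinAt.congr_of_mem hline ha
  rw [hline x hx, (uniqueDiffOn_Ico a b a ha).eq_deriv _ (hf a ha) hd]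

theorem le_rpow_one_add_mul_rpow_neg {x σ ε : ℝ} (hσ : 0 < σ) (hx : σ ≤ x)
    (hε : 0 ≤ ε) : x ≤ x ^ (1 + ε) * σ ^ (-ε) := by
  have hx0 : 0 < x := hσ.trans_le hx
  calc x = x * 1 := (mul_one x).symm
    _ ≤ x * (x / σ) ^ ε := by gcongr; exact Real.one_le_rpow ((one_le_div hσ).2 hx) hε
    _ = x ^ (1 + ε) * σ ^ (-ε) := by
        rw [Real.div_rpow hx0.le hσ.le, Real.rpow_add hx0, Real.rpow_one, Real.rpow_neg hσ.le]
        ring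

/-- The remainder `F_σ` of the paper, for the gain `p_σ(t) = ψ(t² / σ²)`. -/
noncomputable def calibrationRemainder (ψ : ℝ → ℝ) (c σ t : ℝ) : ℝ :=
  -σ ^ 2 * ψ (t ^ 2 / σ ^ 2) - c * t ^ 2

section
variable {ψ : ℝ → ℝ} {c σ L : ℝ}

theorem calibrationRemainder_eq_of_abs_lt (hψ : ∀ u ∈ Ico (0 : ℝ) 1, ψ u = ψ 0 - c * u)
    (hσ : 0 < σ) {t : ℝ} (ht : |t| < σ) : calibrationRemainder ψ c σ t = -σ ^ 2 * ψ 0 := by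
  have hmem : t ^ 2 / σ ^ 2 ∈ Ico (0 : ℝ) 1 :=
    ⟨by positivity, (div_lt_one (by positivity)).2 (sq_lt_sq' (abs_lt.1 ht).1 (abs_lt.1 ht).2)⟩
  rw [calibrationRemainder, hψ _ hmem]
  field_simp
  ring

theorem abs_calibrationRemainder_sub_le
    (hL : ∀ s t : ℝ, |ψ (s ^ 2) - ψ (t ^ 2)| ≤ L * |s - t|) (hσ : 0 < σ) (hc : 0 ≤ c) (s t : ℝ) :
    |calibrationRemainder ψ c σ s - calibrationRemainder ψ c σ t| ≤
      σ * L * |s - t| + c * (|s - t| * |s + t|) := by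
  have hψ : |ψ (s ^ 2 / σ ^ 2) - ψ (t ^ 2 / σ ^ 2)| ≤ L * |s - t| / σ := by
    have h := hL (s / σ) (t / σ)
    rwa [div_pow, div_pow, ← sub_div, abs_div, abs_of_pos hσ, ← mul_div_assoc] at h
  have hsplit : calibrationRemainder ψ c σ s - calibrationRemainder ψ c σ t =
      -(σ ^ 2 * (ψ (s ^ 2 / σ ^ 2) - ψ (t ^ 2 / σ ^ 2)) + c * ((s - t) * (s + t))) := by
    simp only [calibrationRemainder]
    ring
  rw [hsplit, abs_neg]
  refine (abs_add_le _ _).trans (add_le_add ?_ ?_)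
  · rw [abs_mul, abs_of_pos (by positivity)]
    calc σ ^ 2 * |ψ (s ^ 2 / σ ^ 2) - ψ (t ^ 2 / σ ^ 2)|
        ≤ σ ^ 2 * (L * |s - t| / σ) := by gcongr
      _ = σ * L * |s - t| := by field_simp
  · rw [abs_mul, abs_mul, abs_of_nonneg hc]

theorem nonneg_of_abs_comp_sq_sub_le (hL : ∀ s t : ℝ, |ψ (s ^ 2) - ψ (t ^ 2)| ≤ L * |s - t|) :
    0 ≤ L := by
  simpa using (abs_nonneg _).trans (hL 1 0)

theorem abs_calibrationRemainder_sub_le_rpow {ε M : ℝ}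
    (hψ : ∀ u ∈ Ico (0 : ℝ) 1, ψ u = ψ 0 - c * u)
    (hL : ∀ s t : ℝ, |ψ (s ^ 2) - ψ (t ^ 2)| ≤ L * |s - t|) (hσ : 0 < σ) (hc : 0 ≤ c)
    (hε : 0 ≤ ε) (hMσ : 2 * M ≤ σ) {y u v : ℝ} (hu : |u| ≤ M) (hv : |v| ≤ M) :
    |calibrationRemainder ψ c σ (y - v) - calibrationRemainder ψ c σ (y - u)| ≤
      2 * M * (L + 2 * c) * (|2 * y| ^ (1 + ε) * σ ^ (-ε)) := by
  have hL0 : 0 ≤ L := nonneg_of_abs_comp_sq_sub_le hL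
  have hM : 0 ≤ M := (abs_nonneg u).trans hu
  have h2y : |2 * y| = 2 * |y| := by rw [abs_mul, abs_two]
  rcases lt_or_ge |2 * y| σ with hsmall | hlarge
  · have hres : ∀ w, |w| ≤ M → calibrationRemainder ψ c σ (y - w) = -σ ^ 2 * ψ 0 :=
      fun w hw => calibrationRemainder_eq_of_abs_lt hψ hσ
        ((abs_sub _ _).trans_lt (by linarith))
    rw [hres v hv, hres u hu, sub_self, abs_zero]
    positivity
  · have huv : |u - v| ≤ 2 * M := (abs_sub _ _).trans (by linarith)
    have hsum : |2 * y - (u + v)| ≤ 2 * |2 * y| :=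
      (abs_sub _ _).trans (by linarith [abs_add_le u v])
    have hrem := abs_calibrationRemainder_sub_le hL hσ hc (y - v) (y - u)
    rw [sub_sub_sub_cancel_left, show y - v + (y - u) = 2 * y - (u + v) by ring] at hrem
    calc _ ≤ σ * L * |u - v| + c * (|u - v| * |2 * y - (u + v)|) := hrem
      _ ≤ |2 * y| * L * (2 * M) + c * (2 * M * (2 * |2 * y|)) := by gcongr
      _ = 2 * M * (L + 2 * c) * |2 * y| := by ring
      _ ≤ 2 * M * (L + 2 * c) * (|2 * y| ^ (1 + ε) * σ ^ (-ε)) := by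
          gcongr
          exact le_rpow_one_add_mul_rpow_neg hσ hlarge hε

end

section
variable {Ω : Type*} {m m₀ : MeasurableSpace Ω} {μ : Measure Ω} {Y U V : Ω → ℝ} {C : ℝ}

theorem integrable_abs_const_mul_rpow {p : ℝ} (hY : Integrable (fun ω => |Y ω| ^ p) μ)
    (a : ℝ) : Integrable (fun ω => |a * Y ω| ^ p) μ :=
  (hY.const_mul (|a| ^ p)).congr (ae_of_all _ fun ω => by
    dsimp only
    rw [abs_mul, Real.mul_rpow (abs_nonneg a) (abs_nonneg _)])

theorem integral_calibrationRemainder_sub_of_integrable {ψ : ℝ → ℝ} {c σ : ℝ} {Z₁ Z₂ : Ω → ℝ}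
    (h₁ : Integrable (fun ω => ψ (Z₁ ω ^ 2 / σ ^ 2)) μ)
    (h₂ : Integrable (fun ω => ψ (Z₂ ω ^ 2 / σ ^ 2)) μ)
    (hZ : Integrable (fun ω => Z₂ ω ^ 2 - Z₁ ω ^ 2) μ) :
    σ ^ 2 * ((∫ ω, ψ (Z₁ ω ^ 2 / σ ^ 2) ∂μ) - ∫ ω, ψ (Z₂ ω ^ 2 / σ ^ 2) ∂μ) -
        c * ∫ ω, (Z₂ ω ^ 2 - Z₁ ω ^ 2) ∂μ =
      ∫ ω, (calibrationRemainder ψ c σ (Z₂ ω) - calibrationRemainder ψ c σ (Z₁ ω)) ∂μ := by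
  have h₁₂ : Integrable (fun ω => σ ^ 2 * (ψ (Z₁ ω ^ 2 / σ ^ 2) - ψ (Z₂ ω ^ 2 / σ ^ 2))) μ :=
    (h₁.sub h₂).const_mul _
  rw [← integral_sub h₁ h₂, ← integral_const_mul, ← integral_const_mul,
    ← integral_sub h₁₂ (hZ.const_mul c)]
  congr 1 with ω
  simp only [calibrationRemainder]
  ring

variable [IsFiniteMeasure μ]

theorem integrable_of_integrable_abs_rpow {p : ℝ} (hp : 1 ≤ p)
    (hY : AEStronglyMeasurable Y μ) (h : Integrable (fun ω => |Y ω| ^ p) μ) :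
    Integrable Y μ := by
  have hLp : MemLp Y (ENNReal.ofReal p) μ := by
    refine (integrable_norm_rpow_iff hY (by simp; linarith) ENNReal.ofReal_ne_top).1 ?_
    simpa [ENNReal.toReal_ofReal (zero_le_one.trans hp)] using h
  exact memLp_one_iff_integrable.1 (hLp.mono_exponent (by simpa using hp))

theorem integrable_comp_sq_div {ψ : ℝ → ℝ} (hψ : Measurable ψ) {L : ℝ}
    (hL : ∀ s t : ℝ, |ψ (s ^ 2) - ψ (t ^ 2)| ≤ L * |s - t|) {Z : Ω → ℝ} (hZ : Integrable Z μ)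
    (σ : ℝ) : Integrable (fun ω => ψ (Z ω ^ 2 / σ ^ 2)) μ := by
  refine ((integrable_const |ψ 0|).add ((hZ.div_const σ).abs.const_mul L)).mono'
    (hψ.comp_aemeasurable ((hZ.aemeasurable.pow_const 2).div_const _)).aestronglyMeasurable
    (ae_of_all _ fun ω => ?_)
  have h := hL (Z ω / σ) 0
  rw [div_pow, zero_pow two_ne_zero, sub_zero] at h
  simp only [Pi.add_apply, Real.norm_eq_abs]
  linarith [abs_sub_abs_le_abs_sub (ψ (Z ω ^ 2 / σ ^ 2)) (ψ 0)]

theorem integral_mul_sub_condExp (hm : m ≤ m₀) {W : Ω → ℝ} (hW : StronglyMeasurable[m] W)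
    (hWC : ∀ ω, |W ω| ≤ C) (hY : Integrable Y μ) :
    ∫ ω, W ω * (Y ω - μ[Y|m] ω) ∂μ = 0 := by
  have hW' : AEStronglyMeasurable W μ := (hW.mono hm).aestronglyMeasurable
  have hWY : Integrable (fun ω => W ω * Y ω) μ := hY.bdd_mul hW' (ae_of_all _ hWC)
  have hWE : Integrable (fun ω => W ω * μ[Y|m] ω) μ :=
    integrable_condExp.bdd_mul hW' (ae_of_all _ hWC)
  have hpull : μ[fun ω => W ω * Y ω|m] =ᵐ[μ] fun ω => W ω * μ[Y|m] ω :=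
    condExp_mul_of_stronglyMeasurable_left hW hWY hY
  simp_rw [mul_sub]
  rw [integral_sub hWY hWE, ← integral_condExp hm, integral_congr_ae hpull, sub_self]

theorem integrable_sq_sub_sub_sq_sub (hY : Integrable Y μ) (hU : AEStronglyMeasurable U μ)
    (hV : AEStronglyMeasurable V μ) (hUC : ∀ ω, |U ω| ≤ C) (hVC : ∀ ω, |V ω| ≤ C) :
    Integrable (fun ω => (Y ω - U ω) ^ 2 - (Y ω - V ω) ^ 2) μ := by
  have hUV : Integrable (fun ω => U ω + V ω) μ :=
    Integrable.of_bound (hU.add hV) (C + C) (ae_of_all _ fun ω =>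
      (abs_add_le _ _).trans (add_le_add (hUC ω) (hVC ω)))
  have h := ((hY.const_mul 2).sub hUV).bdd_mul (hV.sub hU) (c := C + C)
    (ae_of_all _ fun ω => (abs_sub _ _).trans (add_le_add (hVC ω) (hUC ω)))
  refine h.congr (ae_of_all _ fun ω => ?_)
  simp only [Pi.sub_apply]
  ring

theorem integral_sq_sub_sub_sq_sub_eq (hm : m ≤ m₀) (hY : Integrable Y μ)
    (hU : StronglyMeasurable[m] U) (hV : StronglyMeasurable[m] V) (hUC : ∀ ω, |U ω| ≤ C)
    (hVC : ∀ ω, |V ω| ≤ C) (hVY : V =ᵐ[μ] μ[Y|m]) :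
    ∫ ω, ((Y ω - U ω) ^ 2 - (Y ω - V ω) ^ 2) ∂μ = ∫ ω, (U ω - V ω) ^ 2 ∂μ := by
  have hWC : ∀ ω, |2 * (V ω - U ω)| ≤ 2 * (C + C) := fun ω => by
    rw [abs_mul, abs_two]
    exact mul_le_mul_of_nonneg_left ((abs_sub _ _).trans (add_le_add (hVC ω) (hUC ω)))
      two_pos.le
  have hsq : Integrable (fun ω => (U ω - V ω) ^ 2) μ :=
    Integrable.of_bound (((hU.mono hm).sub (hV.mono hm)).aestronglyMeasurable.pow 2)
      ((C + C) ^ 2) (ae_of_all _ fun ω => by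
        rw [Real.norm_eq_abs, abs_pow]
        exact pow_le_pow_left₀ (abs_nonneg _)
          ((abs_sub _ _).trans (add_le_add (hUC ω) (hVC ω))) 2)
  have hcross : Integrable (fun ω => 2 * (V ω - U ω) * (Y ω - μ[Y|m] ω)) μ :=
    (hY.sub integrable_condExp).bdd_mul
      (((hV.sub hU).const_mul 2).mono hm).aestronglyMeasurable (ae_of_all _ hWC)
  calc ∫ ω, ((Y ω - U ω) ^ 2 - (Y ω - V ω) ^ 2) ∂μ
      = ∫ ω, ((U ω - V ω) ^ 2 + 2 * (V ω - U ω) * (Y ω - μ[Y|m] ω)) ∂μ :=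
        integral_congr_ae (hVY.mono fun ω hω => by dsimp only; rw [← hω]; ring)
    _ = ∫ ω, (U ω - V ω) ^ 2 ∂μ := by
        rw [integral_add hsq hcross, integral_mul_sub_condExp (W := fun ω => 2 * (V ω - U ω)) hm
          ((hV.sub hU).const_mul 2) hWC hY, add_zero]

theorem integral_calibrationRemainder_sub_of_condExp (hm : m ≤ m₀) {ψ : ℝ → ℝ} (hψ : Measurable ψ)
    {L : ℝ} (hL : ∀ s t : ℝ, |ψ (s ^ 2) - ψ (t ^ 2)| ≤ L * |s - t|) (c σ : ℝ)
    (hY : Integrable Y μ) (hU : StronglyMeasurable[m] U) (hV : StronglyMeasurable[m] V)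
    (hUC : ∀ ω, |U ω| ≤ C) (hVC : ∀ ω, |V ω| ≤ C) (hVY : V =ᵐ[μ] μ[Y|m]) :
    σ ^ 2 * ((∫ ω, ψ ((Y ω - V ω) ^ 2 / σ ^ 2) ∂μ) - ∫ ω, ψ ((Y ω - U ω) ^ 2 / σ ^ 2) ∂μ) -
        c * ∫ ω, (U ω - V ω) ^ 2 ∂μ =
      ∫ ω, (calibrationRemainder ψ c σ (Y ω - U ω) -
        calibrationRemainder ψ c σ (Y ω - V ω)) ∂μ := by
  have hUi : Integrable U μ := .of_bound (hU.mono hm).aestronglyMeasurable C (ae_of_all _ hUC)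
  have hVi : Integrable V μ := .of_bound (hV.mono hm).aestronglyMeasurable C (ae_of_all _ hVC)
  rw [← integral_sq_sub_sub_sq_sub_eq hm hY hU hV hUC hVC hVY]
  exact integral_calibrationRemainder_sub_of_integrable
    (integrable_comp_sq_div hψ hL (hY.sub hVi) σ) (integrable_comp_sq_div hψ hL (hY.sub hUi) σ)
    (integrable_sq_sub_sub_sq_sub hY hUi.1 hVi.1 hUC hVC)

end

theorem stmt14_general {Ω 𝒳 : Type*} [MeasurableSpace Ω] [MeasurableSpace 𝒳]
    (μ : Measure Ω) [IsProbabilityMeasure μ]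
    (X : Ω → 𝒳) (Y : Ω → ℝ) (hX : Measurable X) (hY : Measurable Y)
    (fstar : 𝒳 → ℝ) (hfstar : Measurable fstar)
    (hcond : (fun ω => fstar (X ω)) =ᵐ[μ] μ[Y | MeasurableSpace.comap X inferInstance])
    (ψ ψ' : ℝ → ℝ) (hψmeas : Measurable ψ)
    (ε M L₁ L₂ σ : ℝ) (hε : 0 < ε) (hM : 0 < M) (hσ : max (2 * M) 1 ≤ σ)
    (hfstarM : ∀ x, |fstar x| ≤ M)
    (hL₁ : ∀ s t : ℝ, |ψ (s ^ 2) - ψ (t ^ 2)| ≤ L₁ * |s - t|)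
    (hderiv : ∀ t ∈ Set.Ico (0 : ℝ) 1,
      HasDerivWithinAt ψ (ψ' t) (Set.Ico (0 : ℝ) 1) t)
    (hψ'0 : ψ' 0 < 0)
    (hmom : Integrable (fun ω => |Y ω| ^ (1 + ε)) μ)
    (hconst : ∀ s ∈ Set.Ioo (0 : ℝ) 1, ∀ t ∈ Set.Ioo (0 : ℝ) 1, ψ' s = ψ' t) :
    ∀ f : 𝒳 → ℝ, Measurable f → (∀ x, |f x| ≤ M) →
      |σ ^ 2 * ((∫ ω, ψ ((Y ω - fstar (X ω)) ^ 2 / σ ^ 2) ∂μ) -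
              ∫ ω, ψ ((Y ω - f (X ω)) ^ 2 / σ ^ 2) ∂μ) -
          (-ψ' 0) * ∫ ω, (f (X ω) - fstar (X ω)) ^ 2 ∂μ| ≤
        6 * M * (max (L₂ + (-ψ' 0)) (L₁ / 2) + (-ψ' 0)) *
            (∫ ω, |2 * Y ω| ^ (1 + ε) ∂μ) *
          σ ^ (-ε) := by
  intro f hf hfM
  have hc : 0 ≤ -ψ' 0 := by linarith
  have hσ0 : 0 < σ := zero_lt_one.trans_le ((le_max_right _ _).trans hσ)
  have hψ : ∀ u ∈ Ico (0 : ℝ) 1, ψ u = ψ 0 - (-ψ' 0) * u := fun u hu => by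
    rw [eq_add_mul_sub_of_hasDerivWithinAt_Ico hderiv hconst u hu]
    ring
  have hYint : Integrable Y μ :=
    integrable_of_integrable_abs_rpow (by linarith) hY.aestronglyMeasurable hmom
  have hfX : StronglyMeasurable[MeasurableSpace.comap X inferInstance] fun ω => f (X ω) :=
    (hf.comp (comap_measurable X)).stronglyMeasurable
  have hfstarX : StronglyMeasurable[MeasurableSpace.comap X inferInstance]
      fun ω => fstar (X ω) :=
    (hfstar.comp (comap_measurable X)).stronglyMeasurable
  rw [integral_calibrationRemainder_sub_of_condExp hX.comap_le hψmeas hL₁ _ _ hYint hfX hfstarX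
    (fun _ => hfM _) (fun _ => hfstarM _) hcond, ← Real.norm_eq_abs]
  calc _ ≤ ∫ ω, 2 * M * (L₁ + 2 * -ψ' 0) * (|2 * Y ω| ^ (1 + ε) * σ ^ (-ε)) ∂μ :=
        norm_integral_le_of_norm_le
          (((integrable_abs_const_mul_rpow hmom 2).mul_const _).const_mul _)
          (ae_of_all _ fun _ => abs_calibrationRemainder_sub_le_rpow hψ hL₁ hσ0 hc hε.le
            ((le_max_left _ _).trans hσ) (hfstarM _) (hfM _))
    _ = 2 * M * (L₁ + 2 * -ψ' 0) * (∫ ω, |2 * Y ω| ^ (1 + ε) ∂μ) * σ ^ (-ε) := by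
        rw [integral_const_mul, integral_mul_const]
        ring
    _ ≤ _ := by
        gcongr ?_ * _ * _
        nlinarith [le_max_right (L₂ + -ψ' 0) (L₁ / 2), nonneg_of_abs_comp_sq_sub_le hL₁]

/-- Asymptotic mean calibration: for `f* = E(Y|X)` bounded by `M`,
`E|Y|^{1+ε} < ∞`, `σ ≥ max(2M,1)`, and a strongly mean-calibrated gain
`p_σ(t) = ψ(t²/σ²)` with `c₀ = -ψ'(0)`, every measurable `f` with `‖f‖_∞ ≤ M`
satisfies, when `ψ'` is moreover constant on `(0,1)` (exact mean calibration),
the sharper bound `|σ²[𝒢_σ(f*) - 𝒢_σ(f)] - c₀‖f - f*‖²_{2,ρ}| ≤ c'_ε σ^{-ε}`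
with `c'_ε = 6M(L₃+c₀)E|2Y|^{1+ε}`. -/
theorem stmt14 {Ω 𝒳 : Type*} [MeasurableSpace Ω] [MeasurableSpace 𝒳]
    (μ : Measure Ω) [IsProbabilityMeasure μ]
    (X : Ω → 𝒳) (Y : Ω → ℝ) (hX : Measurable X) (hY : Measurable Y)
    (fstar : 𝒳 → ℝ) (hfstar : Measurable fstar)
    (hcond : (fun ω => fstar (X ω)) =ᵐ[μ] μ[Y | MeasurableSpace.comap X inferInstance])
    (ψ ψ' : ℝ → ℝ) (hψmeas : Measurable ψ)
    (ε M L₁ L₂ σ : ℝ) (hε : 0 < ε) (hM : 0 < M) (hσ : max (2 * M) 1 ≤ σ)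
    (hfstarM : ∀ x, |fstar x| ≤ M)
    (hψ_nonneg : ∀ t, 0 ≤ t → 0 ≤ ψ t)
    (hψ_anti : ∀ u v : ℝ, 0 ≤ u → u ≤ v → ψ v ≤ ψ u)
    (hL₁ : ∀ s t : ℝ, |ψ (s ^ 2) - ψ (t ^ 2)| ≤ L₁ * |s - t|)
    (hderiv : ∀ t ∈ Set.Ico (0 : ℝ) 1,
      HasDerivWithinAt ψ (ψ' t) (Set.Ico (0 : ℝ) 1) t)
    (hψ'0 : ψ' 0 < 0)
    (hL₂ : ∀ s ∈ Set.Ico (0 : ℝ) 1, ∀ t ∈ Set.Ico (0 : ℝ) 1,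
      |ψ' s - ψ' t| ≤ L₂ * |s - t|)
    (hmom : Integrable (fun ω => |Y ω| ^ (1 + ε)) μ)
    (hconst : ∀ s ∈ Set.Ioo (0 : ℝ) 1, ∀ t ∈ Set.Ioo (0 : ℝ) 1, ψ' s = ψ' t) :
    ∀ f : 𝒳 → ℝ, Measurable f → (∀ x, |f x| ≤ M) →
      |σ ^ 2 * ((∫ ω, ψ ((Y ω - fstar (X ω)) ^ 2 / σ ^ 2) ∂μ) -
              ∫ ω, ψ ((Y ω - f (X ω)) ^ 2 / σ ^ 2) ∂μ) -
          (-ψ' 0) * ∫ ω, (f (X ω) - fstar (X ω)) ^ 2 ∂μ| ≤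
        6 * M * (max (L₂ + (-ψ' 0)) (L₁ / 2) + (-ψ' 0)) *
            (∫ ω, |2 * Y ω| ^ (1 + ε) ∂μ) *
          σ ^ (-ε) :=
  stmt14_general μ X Y hX hY fstar hfstar hcond ψ ψ' hψmeas ε M L₁ L₂ σ hε hM hσ hfstarM hL₁ hderiv
    hψ'0 hmom hconst
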